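/- arXiv:1202.3190 — 2 statements merged into one kernel-verified Lean document; each statement's English description precedes it below -/
import Mathlib

section
/- The coefficient of the monomial x_1^{k-1}···x_n^{k-1} in the polynomial H'_m(x) = ∏_{1≤i<j≤n}(x_i-x_j)^{2m} · L(x_1,...,x_n) equals n! times the coefficient of the monomial x_1^{k-n}x_2^{k-n+1}···x_n^{k-1} in the polynomial H_m(x) = ∏_{1≤i<j≤n}(x_i-x_j)^{2m-1} · L(x_1,...,x_n). -/
/-!
Write `V = ∏_{i<j} (X i - X j)` and `A = V ^ (2m - 1) * L`. Then `V` is the alternant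
`∑_σ sign σ • X^(σ δ)` of the staircase `δ = (n-1, …, 1, 0)`, and `A` is antisymmetric because
`2m - 1` is odd and `L` is symmetric. Since `c = (k-1, …, k-1) = δ + d` is fixed by every
permutation, the coefficient of `X^c` in `V * A = V ^ (2m) * L` is
`∑_σ sign σ • coeff (σ d) A = ∑_σ sign σ • sign σ • coeff d A = n! • coeff d A`.
-/

open MvPolynomial Finset Equiv

namespace MvPolynomial

variable {σ R : Type*} [CommRing R] [Fintype σ] [DecidableEq σ]

def IsAntisymmetric (p : MvPolynomial σ R) : Prop :=
  ∀ e : Perm σ, rename e p = Perm.sign e • p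

namespace IsAntisymmetric

variable {p q : MvPolynomial σ R}

theorem mul_isSymmetric (hp : p.IsAntisymmetric) (hq : q.IsSymmetric) :
    (p * q).IsAntisymmetric := fun e => by
  rw [map_mul, hp e, hq e, smul_mul_assoc]

theorem pow_of_odd (hp : p.IsAntisymmetric) {t : ℕ} (ht : Odd t) :
    (p ^ t).IsAntisymmetric := fun e => by
  rw [map_pow, hp e, smul_pow, Int.units_pow_eq_pow_mod_two, Nat.odd_iff.mp ht, pow_one]

theorem coeff_mapDomain (hp : p.IsAntisymmetric) (e : Perm σ) (d : σ →₀ ℕ) :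
    coeff (d.mapDomain e) p = Perm.sign e • coeff d p := by
  have h := coeff_rename_mapDomain e e.injective p d
  rw [hp e, coeff_smul] at h
  rw [← h, smul_smul, Int.units_mul_self, one_smul]

end IsAntisymmetric

noncomputable def alternant (δ : σ →₀ ℕ) : MvPolynomial σ R :=
  ∑ e : Perm σ, Perm.sign e • monomial (δ.mapDomain e) 1

theorem isAntisymmetric_alternant (δ : σ →₀ ℕ) :
    (alternant δ : MvPolynomial σ R).IsAntisymmetric := by
  intro e
  simp only [alternant, map_sum, Units.smul_def, map_zsmul, rename_monomial,
    ← Finsupp.mapDomain_comp, smul_sum, smul_smul]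
  refine Fintype.sum_equiv (Equiv.mulLeft e) _ _ fun τ => ?_
  simp [Perm.sign_mul, ← mul_assoc]

theorem coeff_alternant_mul {A : MvPolynomial σ R} (hA : A.IsAntisymmetric) (δ d : σ →₀ ℕ)
    (hc : ∀ e : Perm σ, (δ + d).mapDomain e = δ + d) :
    coeff (δ + d) (alternant δ * A) = (Fintype.card σ).factorial • coeff d A := by
  simp only [alternant, sum_mul, coeff_sum, smul_mul_assoc, coeff_smul]
  have hterm : ∀ e : Perm σ,
      Perm.sign e • coeff (δ + d) (monomial (δ.mapDomain e) 1 * A) = coeff d A := by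
    intro e
    rw [← hc e, Finsupp.mapDomain_add, coeff_monomial_mul, one_mul, hA.coeff_mapDomain,
      smul_smul, Int.units_mul_self, one_smul]
  rw [sum_congr rfl fun e _ => hterm e, sum_const, card_univ, Fintype.card_perm]

theorem prod_X_sub_X_eq_det_vandermonde {n : ℕ} :
    ∏ p ∈ univ.filter (fun p : Fin n × Fin n => p.1 < p.2),
        (X p.1 - X p.2 : MvPolynomial (Fin n) R)
      = (Matrix.vandermonde fun i => X i.rev).det := by
  rw [Matrix.det_vandermonde, prod_sigma']
  refine prod_nbij' (fun p => ⟨p.2.rev, p.1.rev⟩) (fun x => (x.2.rev, x.1.rev))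
    ?_ ?_ ?_ ?_ ?_ <;> simp [Fin.rev_lt_rev]

theorem prod_X_sub_X_eq_alternant {n : ℕ} :
    ∏ p ∈ univ.filter (fun p : Fin n × Fin n => p.1 < p.2),
        (X p.1 - X p.2 : MvPolynomial (Fin n) R)
      = alternant (Finsupp.equivFunOnFinite.symm fun i => (i.rev : ℕ)) := by
  rw [prod_X_sub_X_eq_det_vandermonde, Matrix.det_apply, alternant]
  refine Fintype.sum_equiv (Fin.revPerm.permCongr) _ _ fun τ => ?_
  rw [Perm.sign_permCongr]
  congr 1
  rw [monomial_eq, C_1, one_mul, Finsupp.prod_fintype _ _ fun _ => pow_zero _]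
  refine Fintype.prod_equiv (τ.trans Fin.revPerm) _ _ fun i => ?_
  rw [Finsupp.mapDomain_equiv_apply]
  simp only [Matrix.vandermonde_apply, trans_apply, Fin.revPerm_apply, Fin.val_rev,
    permCongr_eq_mul, Perm.mul_def, Perm.inv_def, Fin.revPerm_symm, symm_trans, Fin.rev_rev,
    symm_apply_apply, Finsupp.equivFunOnFinite_symm_apply_apply]
  congr 1
  omega

end MvPolynomial

theorem vandermonde_power_coeff_relation_general {R : Type*} [CommRing R]
    (n k m : ℕ) (hm : 0 < m) (hk : n ≤ k)
    (L : MvPolynomial (Fin n) R) (hL : L.IsSymmetric) :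
    MvPolynomial.coeff (Finsupp.equivFunOnFinite.symm fun _ : Fin n => k - 1)
      ((∏ p ∈ Finset.univ.filter (fun p : Fin n × Fin n => p.1 < p.2),
          (X p.1 - X p.2) ^ (2 * m)) * L)
    = (n.factorial : R) *
      MvPolynomial.coeff (Finsupp.equivFunOnFinite.symm fun i : Fin n => k - n + (i : ℕ))
        ((∏ p ∈ Finset.univ.filter (fun p : Fin n × Fin n => p.1 < p.2),
            (X p.1 - X p.2) ^ (2 * m - 1)) * L) := by
  set δ : Fin n →₀ ℕ := Finsupp.equivFunOnFinite.symm fun i => (i.rev : ℕ)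
  set d : Fin n →₀ ℕ := Finsupp.equivFunOnFinite.symm fun i => k - n + (i : ℕ)
  have hδd : δ + d = Finsupp.equivFunOnFinite.symm fun _ => k - 1 := by
    ext i
    simp only [δ, d, Finsupp.add_apply, Finsupp.coe_equivFunOnFinite_symm, Fin.val_rev]
    omega
  have hA : (alternant δ ^ (2 * m - 1) * L).IsAntisymmetric :=
    ((isAntisymmetric_alternant δ).pow_of_odd ⟨m - 1, by omega⟩).mul_isSymmetric hL
  have hc (e : Perm (Fin n)) : (δ + d).mapDomain e = δ + d := by
    ext i
    simp [hδd, Finsupp.mapDomain_equiv_apply]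
  have hsplit : 2 * m = 2 * m - 1 + 1 := by omega
  rw [prod_pow, prod_pow, prod_X_sub_X_eq_alternant, ← hδd]
  conv_lhs => rw [hsplit, pow_succ', mul_assoc]
  rw [coeff_alternant_mul hA δ d hc, Fintype.card_fin, nsmul_eq_mul]

theorem vandermonde_power_coeff_relation {R : Type*} [CommRing R]
    (n k m : ℕ) (hn : 0 < n) (hm : 0 < m) (hk : n ≤ k)
    (L : MvPolynomial (Fin n) R) (hL : L.IsSymmetric) :
    MvPolynomial.coeff (Finsupp.equivFunOnFinite.symm fun _ : Fin n => k - 1)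
      ((∏ p ∈ Finset.univ.filter (fun p : Fin n × Fin n => p.1 < p.2),
          (X p.1 - X p.2) ^ (2 * m)) * L)
    = (n.factorial : R) *
      MvPolynomial.coeff (Finsupp.equivFunOnFinite.symm fun i : Fin n => k - n + (i : ℕ))
        ((∏ p ∈ Finset.univ.filter (fun p : Fin n × Fin n => p.1 < p.2),
            (X p.1 - X p.2) ^ (2 * m - 1)) * L) :=
  vandermonde_power_coeff_relation_general n k m hm hk L hL
end

section
/- Let F be a field, A_1,...,A_n finite nonempty subsets with |A_i| = k_i, and P ∈ F[x_1,...,x_n] a nonzero polynomial with deg P ≤ ∑_{i=1}^n (k_i - 1). If the coefficient of x_1^{k_1-1}···x_n^{k_n-1} in P(x_1,...,x_n)·(x_1+···+x_n)^{∑(k_i-1) - deg P} is nonzero, then |{a_1+···+a_n : a_i ∈ A_i, P(a_1,...,a_n) ≠ 0}| ≥ ∑_{i=1}^n (k_i - 1) - deg P + 1. -/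
/-!
If the set `S` of sums had at most `e = ∑ (kᵢ - 1) - deg P` elements, then
`Q = P · (∑ xᵢ) ^ (e - |S|) · ∏_{s ∈ S} (∑ xᵢ - s)` would vanish on `A₁ × ⋯ × Aₙ`: at each grid
point either `P` vanishes or the sum of the coordinates lies in `S`. But `deg Q ≤ ∑ (kᵢ - 1)`,
and `Q` differs from `P · (∑ xᵢ) ^ e` by terms of lower degree, so its coefficient of
`x₁^(k₁-1) ⋯ xₙ^(kₙ-1)` is nonzero, and the Combinatorial Nullstellensatz gives a grid point where
`Q` does not vanish.
-/

open MvPolynomial Finset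

namespace MvPolynomial

variable {σ R : Type*}

lemma totalDegree_pow_le_of_totalDegree_le_one [CommSemiring R] {L : MvPolynomial σ R}
    (hL : L.totalDegree ≤ 1) (j : ℕ) : (L ^ j).totalDegree ≤ j :=
  (totalDegree_pow L j).trans (by simpa using Nat.mul_le_mul_left j hL)

section CommRing

variable [CommRing R] {L : MvPolynomial σ R}

lemma totalDegree_prod_sub_C_le (hL : L.totalDegree ≤ 1) (T : Finset R) :
    (∏ s ∈ T, (L - C s)).totalDegree ≤ #T :=
  (totalDegree_finsetProd _ _).trans <| by
    simpa using Finset.sum_le_sum fun s _ => (totalDegree_sub_C_le L s).trans hL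

lemma totalDegree_prod_sub_C_sub_pow_lt (hL : L.totalDegree ≤ 1) {T : Finset R}
    (hT : T.Nonempty) : (∏ s ∈ T, (L - C s) - L ^ #T).totalDegree < #T := by
  induction hT using Finset.Nonempty.cons_induction with
  | singleton a => simp
  | cons a T ha _ ih =>
    have hsplit : ∏ s ∈ T.cons a ha, (L - C s) - L ^ #(T.cons a ha)
        = L * (∏ s ∈ T, (L - C s) - L ^ #T) - C a * ∏ s ∈ T, (L - C s) := by
      rw [prod_cons, card_cons, pow_succ]; ring
    rw [hsplit, card_cons, Nat.lt_succ_iff]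
    refine (totalDegree_sub _ _).trans (max_le ?_ ?_)
    · exact (totalDegree_mul _ _).trans (by omega)
    · exact (totalDegree_mul _ _).trans
        (by simpa using totalDegree_prod_sub_C_le hL T)

lemma coeff_mul_prod_sub_C_eq_coeff_mul_pow (hL : L.totalDegree ≤ 1) (T : Finset R)
    (g : MvPolynomial σ R) {d : σ →₀ ℕ} (hd : g.totalDegree + #T ≤ d.degree) :
    coeff d (g * ∏ s ∈ T, (L - C s)) = coeff d (g * L ^ #T) := by
  rcases T.eq_empty_or_nonempty with rfl | hT
  · simp
  rw [← sub_eq_zero, ← coeff_sub, ← mul_sub]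
  apply coeff_eq_zero_of_totalDegree_lt
  calc (g * (∏ s ∈ T, (L - C s) - L ^ #T)).totalDegree
      ≤ g.totalDegree + (∏ s ∈ T, (L - C s) - L ^ #T).totalDegree := totalDegree_mul _ _
    _ < g.totalDegree + #T := by
      have := totalDegree_prod_sub_C_sub_pow_lt hL hT; omega
    _ ≤ d.degree := hd

lemma exists_eval_ne_zero_of_coeff_ne_zero_of_totalDegree_le [Finite σ] [IsDomain R]
    {f : MvPolynomial σ R} {t : σ →₀ ℕ} (ht : f.coeff t ≠ 0) (hf : f.totalDegree ≤ t.degree)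
    (S : σ → Finset R) (htS : ∀ i, t i < #(S i)) :
    ∃ s : σ → R, (∀ i, s i ∈ S i) ∧ eval s f ≠ 0 :=
  combinatorial_nullstellensatz_exists_eval_nonzero f t ht
    (hf.antisymm (le_totalDegree (mem_support_iff.mpr ht))) S htS

end CommRing

end MvPolynomial

theorem anr_polynomial_method_general {F : Type*} [Field F] (n : ℕ)
    (A : Fin n → Finset F) (hA : ∀ i, (A i).Nonempty)
    (k : Fin n → ℕ) (hk : ∀ i, (A i).card = k i)
    (P : MvPolynomial (Fin n) F)
    (hdeg : P.totalDegree ≤ ∑ i, (k i - 1))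
    (hcoeff : MvPolynomial.coeff (Finsupp.equivFunOnFinite.symm fun i => k i - 1)
        (P * (∑ i, X i) ^ (∑ i, (k i - 1) - P.totalDegree)) ≠ 0) :
    (∑ i, (k i - 1)) - P.totalDegree + 1 ≤
      Set.ncard {s : F | ∃ a : Fin n → F, (∀ i, a i ∈ A i) ∧
        MvPolynomial.eval a P ≠ 0 ∧ ∑ i, a i = s} := by
  classical
  set t := Finsupp.equivFunOnFinite.symm fun i => k i - 1
  have ht : t.degree = ∑ i, (k i - 1) := by simp [t, Finsupp.degree_eq_sum]
  set e := ∑ i, (k i - 1) - P.totalDegree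
  set L : MvPolynomial (Fin n) F := ∑ i, X i
  have hL : L.totalDegree ≤ 1 := totalDegree_finsetSum_le fun i _ => (totalDegree_X i).le
  set S := {s : F | ∃ a : Fin n → F, (∀ i, a i ∈ A i) ∧ eval a P ≠ 0 ∧ ∑ i, a i = s}
  have hS : S.Finite := ((Fintype.piFinset A).image fun a => ∑ i, a i).finite_toSet.subset <| by
    rintro _ ⟨a, ha, -, rfl⟩
    exact mem_image_of_mem _ (Fintype.mem_piFinset.mpr ha)
  set T := hS.toFinset
  by_contra! hS_card
  have hTe : #T ≤ e := by rw [← Set.ncard_eq_toFinset_card S hS]; omega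
  set Q := P * L ^ (e - #T) * ∏ s ∈ T, (L - C s)
  have hPL : (P * L ^ (e - #T)).totalDegree + #T ≤ t.degree := by
    have := (totalDegree_mul P _).trans
      (add_le_add le_rfl (totalDegree_pow_le_of_totalDegree_le_one hL (e - #T)))
    omega
  have hQ_coeff : coeff t Q ≠ 0 := by
    rwa [coeff_mul_prod_sub_C_eq_coeff_mul_pow hL T _ hPL, mul_assoc, ← pow_add,
      Nat.sub_add_cancel hTe]
  have hQ_deg : Q.totalDegree ≤ t.degree :=
    ((totalDegree_mul _ _).trans (add_le_add le_rfl (totalDegree_prod_sub_C_le hL T))).trans hPL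
  obtain ⟨a, ha, hQa⟩ := exists_eval_ne_zero_of_coeff_ne_zero_of_totalDegree_le hQ_coeff hQ_deg A
    fun i => by have := (hA i).card_pos; rw [hk i] at this ⊢; simp [t]; omega
  apply hQa
  by_cases hPa : eval a P = 0
  · simp [Q, hPa]
  · have hsum : ∑ i, a i ∈ T := hS.mem_toFinset.mpr ⟨a, ha, hPa, rfl⟩
    simp only [Q, map_mul, map_prod, map_sub, eval_C]
    rw [prod_eq_zero hsum (by simp [L]), mul_zero]

theorem anr_polynomial_method {F : Type*} [Field F] (n : ℕ)
    (A : Fin n → Finset F) (hA : ∀ i, (A i).Nonempty)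
    (k : Fin n → ℕ) (hk : ∀ i, (A i).card = k i)
    (P : MvPolynomial (Fin n) F) (hP : P ≠ 0)
    (hdeg : P.totalDegree ≤ ∑ i, (k i - 1))
    (hcoeff : MvPolynomial.coeff (Finsupp.equivFunOnFinite.symm fun i => k i - 1)
        (P * (∑ i, X i) ^ (∑ i, (k i - 1) - P.totalDegree)) ≠ 0) :
    (∑ i, (k i - 1)) - P.totalDegree + 1 ≤
      Set.ncard {s : F | ∃ a : Fin n → F, (∀ i, a i ∈ A i) ∧
        MvPolynomial.eval a P ≠ 0 ∧ ∑ i, a i = s} :=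
  anr_polynomial_method_general n A hA k hk P hdeg hcoeff
end
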